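/- arXiv:1506.06260 — 3 statements merged into one kernel-verified Lean document; each statement's English description precedes it below -/
import Mathlib

section
/- Let G be a group fitting in a short exact sequence 1 → C → G → D∞ → 1 where C is infinite virtually cyclic and D∞ is the infinite dihedral group. Then G contains a subgroup isomorphic to ℤ², i.e., two commuting elements generating a free abelian group of rank 2. -/
/-!
Pick `c ∈ C` of infinite order with `⟨c⟩` of finite index, and lift the generator `r 1` of
`D∞` to `h ∈ G`. Conjugation by `h` restricts to an automorphism `φ` of `C`, and some power
`c ^ a` is sent into `⟨c⟩`, say to `c ^ s`. Since `φ` preserves indices and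
`[C : ⟨c ^ m⟩] = |m| · [C : ⟨c⟩]`, we get `s = ± a`, so `h ^ 2` commutes with `w = c ^ a`.
Now `h ^ 2` maps to `r 2`, of infinite order, while `w` has infinite order and lies in the
kernel, so `h ^ 2` and `w` generate a copy of `ℤ²`.
-/

open Subgroup

section

variable {G : Type*} [Group G]

lemma injective_zpowersHom {x : G} (hx : ¬IsOfFinOrder x) : Function.Injective (zpowersHom G x) :=
  fun _ _ h => Multiplicative.toAdd.injective (injective_zpow_iff_not_isOfFinOrder.mpr hx h)

lemma Int.index_zpowers_ofAdd (m : ℤ) : (zpowers (Multiplicative.ofAdd m)).index = m.natAbs := by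
  rw [← Int.index_zmultiples, ← AddSubgroup.index_toSubgroup]
  rfl

lemma index_zpowers_zpow {c : G} (hc : ¬IsOfFinOrder c) (m : ℤ) :
    (zpowers (c ^ m)).index = m.natAbs * (zpowers c).index := by
  have := (zpowers (Multiplicative.ofAdd m)).index_map_of_injective (injective_zpowersHom hc)
  rwa [MonoidHom.map_zpowers, range_zpowersHom, Int.index_zpowers_ofAdd] at this

lemma exists_not_isOfFinOrder_and_finiteIndex_zpowers [Infinite G]
    (hG : ∃ K : Subgroup G, IsCyclic K ∧ K.FiniteIndex) :
    ∃ c : G, ¬IsOfFinOrder c ∧ (zpowers c).FiniteIndex := by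
  obtain ⟨K, hK, hKfin⟩ := hG
  obtain ⟨c, rfl⟩ := K.isCyclic_iff_exists_zpowers_eq_top.mp hK
  refine ⟨c, infinite_zpowers.mp fun hfin => ?_, hKfin⟩
  have := (finite_iff_finite_and_finiteIndex (zpowers c)).mpr ⟨hfin.to_subtype, hKfin⟩
  exact not_finite G

lemma MulEquiv.natAbs_eq_of_apply_zpow_eq_zpow (φ : G ≃* G) {c : G} (hc : ¬IsOfFinOrder c)
    [(zpowers c).FiniteIndex] {a s : ℤ} (h : φ (c ^ a) = c ^ s) : s.natAbs = a.natAbs := by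
  have hmap : (zpowers (c ^ a)).map (φ : G →* G) = zpowers (c ^ s) := by
    rw [MonoidHom.map_zpowers]
    exact congrArg zpowers h
  have := index_map_equiv (zpowers (c ^ a)) φ
  rw [hmap, index_zpowers_zpow hc, index_zpowers_zpow hc] at this
  exact Nat.eq_of_mul_eq_mul_right (Nat.pos_of_ne_zero FiniteIndex.index_ne_zero) this

lemma MulEquiv.exists_pow_apply_apply_eq_self (φ : G ≃* G) {c : G} (hc : ¬IsOfFinOrder c)
    [(zpowers c).FiniteIndex] : ∃ n : ℕ, 0 < n ∧ φ (φ (c ^ n)) = c ^ n := by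
  obtain ⟨n, hn, -, hmem⟩ :=
    (zpowers c).exists_pow_mem_of_index_ne_zero FiniteIndex.index_ne_zero (φ c)
  obtain ⟨s, hs⟩ := mem_zpowers_iff.mp hmem
  have hφ : φ (c ^ (n : ℤ)) = c ^ s := by rw [map_zpow, zpow_natCast, hs]
  refine ⟨n, hn, ?_⟩
  rw [← zpow_natCast, hφ]
  rcases Int.natAbs_eq_natAbs_iff.mp (φ.natAbs_eq_of_apply_zpow_eq_zpow hc hφ) with rfl | rfl
  · exact hφ
  · rw [zpow_neg, map_inv, hφ, zpow_neg, inv_inv]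

lemma exists_commute_sq_pow_of_range_normal {C : Type*} [Group C] {i : C →* G}
    (hi : Function.Injective i) [i.range.Normal] {c : C} (hc : ¬IsOfFinOrder c)
    [(zpowers c).FiniteIndex] (h : G) : ∃ n : ℕ, 0 < n ∧ Commute (h ^ 2) (i (c ^ n)) := by
  let φ : C ≃* C :=
    (MonoidHom.ofInjective hi).trans ((MulAut.conjNormal h).trans (MonoidHom.ofInjective hi).symm)
  have hφ (y : C) : i (φ y) = h * i y * h⁻¹ := by
    simp [φ, MonoidHom.ofInjective_apply]
  obtain ⟨n, hn, hfix⟩ := φ.exists_pow_apply_apply_eq_self hc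
  refine ⟨n, hn, ?_⟩
  have hconj := congrArg i hfix
  rw [hφ, hφ] at hconj
  generalize i (c ^ n) = w at hconj ⊢
  calc h ^ 2 * w = h * (h * w * h⁻¹) * h⁻¹ * h ^ 2 := by simp [pow_two, mul_assoc]
    _ = w * h ^ 2 := by rw [hconj]

lemma exists_injective_intProd_of_commute {H : Type*} [Group H] (p : G →* H) {t w : G}
    (hcomm : Commute t w) (ht : ¬IsOfFinOrder (p t)) (hw : ¬IsOfFinOrder w) (hpw : p w = 1) :
    ∃ f : Multiplicative (ℤ × ℤ) →* G, Function.Injective f := by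
  have hdisj : Disjoint (zpowersHom G t).range (zpowersHom G w).range := by
    rw [range_zpowersHom, range_zpowersHom, disjoint_iff_inf_le]
    rintro x ⟨hxt, hxw⟩
    obtain ⟨k, rfl⟩ := mem_zpowers_iff.mp hxt
    obtain ⟨l, hl⟩ := mem_zpowers_iff.mp hxw
    have hk : p t ^ k = p t ^ (0 : ℤ) := by
      rw [← map_zpow, ← hl, map_zpow, hpw, one_zpow, zpow_zero]
    rw [injective_zpow_iff_not_isOfFinOrder.mpr ht hk, zpow_zero]
    exact one_mem _
  have hcomm' (k l : Multiplicative ℤ) : Commute (zpowersHom G t k) (zpowersHom G w l) :=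
    hcomm.zpow_zpow _ _
  let e := MulEquiv.prodMultiplicative (G := ℤ) (H := ℤ)
  refine ⟨((zpowersHom G t).noncommCoprod (zpowersHom G w) hcomm').comp e.toMonoidHom, ?_⟩
  have ht' : Function.Injective (zpowersHom G t) :=
    injective_zpowersHom fun h => ht (p.isOfFinOrder h)
  exact ((MonoidHom.noncommCoprod_injective _ _ hcomm').mpr
    ⟨ht', injective_zpowersHom hw, hdisj⟩).comp e.injective

end

theorem extension_of_infinite_dihedral_by_vc_contains_Z2
    {C G : Type*} [Group C] [Group G] [Infinite C]
    (hC : ∃ K : Subgroup C, IsCyclic K ∧ K.FiniteIndex)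
    (i : C →* G) (p : G →* DihedralGroup 0)
    (hi : Function.Injective i) (hp : Function.Surjective p)
    (hexact : i.range = p.ker) :
    ∃ f : Multiplicative (ℤ × ℤ) →* G, Function.Injective f := by
  obtain ⟨c, hc, hfin⟩ := exists_not_isOfFinOrder_and_finiteIndex_zpowers hC
  have : i.range.Normal := hexact ▸ p.normal_ker
  obtain ⟨h, hh⟩ := hp (DihedralGroup.r 1)
  obtain ⟨n, hn, hcomm⟩ := exists_commute_sq_pow_of_range_normal hi hc h
  refine exists_injective_intProd_of_commute p hcomm ?_ ?_ ?_
  · rw [map_pow, hh, isOfFinOrder_pow, not_or, ← orderOf_eq_zero_iff,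
      DihedralGroup.orderOf_r_one]
    exact ⟨rfl, two_ne_zero⟩
  · rw [hi.isOfFinOrder_iff, isOfFinOrder_pow, not_or]
    exact ⟨hc, hn.ne'⟩
  · rw [← MonoidHom.mem_ker, ← hexact]
    exact ⟨c ^ n, rfl⟩
end

section
/- Let H be a group and V a ℚ[H]-module that is finite dimensional over ℚ. Then the H-fixed points of coind_e^H(ℚ) ⊗_ℚ V (with the diagonal action, where coind_e^H(ℚ) = Hom_ℚ(ℚ[H],ℚ) with action (h·f)(x) = f(xh)) form a ℚ-vector space isomorphic to V; in particular if V ≠ 0 then the fixed points are nonzero. -/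
open TensorProduct

/-- Right translation by `h` on the coinduced module `coind_e^H(ℚ) = (H → ℚ)`. -/
def rightTranslation {H : Type*} [Group H] (h : H) : (H → ℚ) →ₗ[ℚ] (H → ℚ) where
  toFun f := fun x => f (x * h)
  map_add' _ _ := rfl
  map_smul' _ _ := rfl

/-- The submodule of `H`-fixed points of `coind_e^H(ℚ) ⊗ V` for the diagonal action. -/
noncomputable def fixedPointsSubmodule {H : Type*} [Group H] (V : Type*) [AddCommGroup V] [Module ℚ V]
    [DistribMulAction H V] [SMulCommClass H ℚ V] :
    Submodule ℚ ((H → ℚ) ⊗[ℚ] V) :=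
  ⨅ h : H,
    LinearMap.eqLocus
      (TensorProduct.map (rightTranslation h) (DistribMulAction.toLinearMap ℚ V h))
      (LinearMap.id : (H → ℚ) ⊗[ℚ] V →ₗ[ℚ] (H → ℚ) ⊗[ℚ] V)

/-!
For finite-dimensional `V`, the tensor product `(H → ℚ) ⊗ V` is the space of all functions
`F : H → V`, and the diagonal action becomes `(h • F) x = h • F (x * h)`. A fixed `F` satisfies
`F x = x⁻¹ • F 1`, so it is determined by `F 1`, and every `v : V` is `F 1` for the fixed
function `x ↦ x⁻¹ • v`.
-/

section FunTensor

variable {R M X : Type*} [CommSemiring R] [AddCommMonoid M] [Module R M]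
  [Module.Free R M] [Module.Finite R M]

variable (R M X) in
noncomputable def funTensorEquiv : (X → R) ⊗[R] M ≃ₗ[R] (X → M) :=
  let b := Module.Free.chooseBasis R M
  TensorProduct.congr (.refl R (X → R)) b.equivFun ≪≫ₗ
    piScalarRight R R (X → R) _ ≪≫ₗ
    { Equiv.piComm fun _ _ => R with
      map_add' := fun _ _ => rfl
      map_smul' := fun _ _ => rfl } ≪≫ₗ
    .piCongrRight fun _ => b.equivFun.symm

@[simp] lemma funTensorEquiv_tmul (f : X → R) (m : M) :
    funTensorEquiv R M X (f ⊗ₜ m) = fun x => f x • m := by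
  ext x
  simp [funTensorEquiv, Function.swap, mul_comm _ (f x), mul_smul, ← Finset.smul_sum,
    Module.Basis.sum_repr]

end FunTensor

theorem exists_fun_inv_smul_eq_iff {H V : Type*} [Group H] [MulAction H V] {F : H → V} :
    (∃ v, (fun x => x⁻¹ • v) = F) ↔ ∀ h x, h • F (x * h) = F x := by
  constructor
  · rintro ⟨v, rfl⟩ h x
    dsimp only
    rw [mul_inv_rev, mul_smul, smul_inv_smul]
  · intro hF
    refine ⟨F 1, funext fun x => ?_⟩
    rw [← hF x 1, one_mul, inv_smul_smul]

section Coinduced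

variable {H V : Type*} [Group H] [AddCommGroup V] [Module ℚ V] [DistribMulAction H V]
  [SMulCommClass H ℚ V]

variable (H V) in
def inverseOrbitMap : V →ₗ[ℚ] (H → V) where
  toFun v x := x⁻¹ • v
  map_add' _ _ := funext fun _ => smul_add _ _ _
  map_smul' _ _ := funext fun _ => smul_comm _ _ _

lemma inverseOrbitMap_injective : Function.Injective (inverseOrbitMap H V) := fun v w hvw => by
  simpa [inverseOrbitMap] using congr_fun hvw 1

lemma mem_fixedPointsSubmodule {t : (H → ℚ) ⊗[ℚ] V} : t ∈ fixedPointsSubmodule V ↔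
    ∀ h : H, TensorProduct.map (rightTranslation h) (DistribSMul.toLinearMap ℚ V h) t = t := by
  simp only [fixedPointsSubmodule, Submodule.mem_iInf, LinearMap.mem_eqLocus, LinearMap.id_apply]
  rfl

variable [FiniteDimensional ℚ V]

lemma funTensorEquiv_map (h : H) (t : (H → ℚ) ⊗[ℚ] V) :
    funTensorEquiv ℚ V H
        (TensorProduct.map (rightTranslation h) (DistribSMul.toLinearMap ℚ V h) t) =
      fun x => h • funTensorEquiv ℚ V H t (x * h) := by
  induction t using TensorProduct.induction_on with
  | zero => ext; simp
  | tmul f v => ext x; simp [rightTranslation, smul_comm h]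
  | add s t hs ht => ext x; simp [hs, ht]

lemma map_funTensorEquiv_fixedPointsSubmodule :
    (fixedPointsSubmodule V).map (funTensorEquiv ℚ V H).toLinearMap =
      LinearMap.range (inverseOrbitMap H V) := by
  ext F
  obtain ⟨t, rfl⟩ := (funTensorEquiv ℚ V H).surjective F
  rw [Submodule.mem_map_equiv, LinearEquiv.symm_apply_apply, mem_fixedPointsSubmodule,
    LinearMap.mem_range]
  simp only [inverseOrbitMap, LinearMap.coe_mk, AddHom.coe_mk, exists_fun_inv_smul_eq_iff]
  simp_rw [← (funTensorEquiv ℚ V H).injective.eq_iff, funTensorEquiv_map, funext_iff]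

end Coinduced

theorem fixed_points_of_coinduced_tensor
    {H : Type*} [Group H] {V : Type*} [AddCommGroup V] [Module ℚ V]
    [DistribMulAction H V] [SMulCommClass H ℚ V] [FiniteDimensional ℚ V] :
    Nonempty (fixedPointsSubmodule (H := H) V ≃ₗ[ℚ] V) :=
  ⟨(funTensorEquiv ℚ V H).submoduleMap _ ≪≫ₗ
    LinearEquiv.ofEq _ _ map_funTensorEquiv_fixedPointsSubmodule ≪≫ₗ
    (LinearEquiv.ofInjective _ inverseOrbitMap_injective).symm⟩
end

section
/- Let G be a group acting on a connected graph Γ (its Cayley graph with respect to a finite generating set {σ₁,…,σ_d}), let H ≤ G, and let S be a finite union of right cosets of H in G. Then the set of connected components of the full subgraph of Γ spanned by G \ S has only finitely many orbits under the left action of H. -/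
/-!
Every vertex `x ∉ S` is joined to `1` by a path in the Cayley graph. Either this path avoids
`S`, or it has a last vertex `b ∉ S` before first entering `S` at some `c = h * t` with
`h ∈ H`, `t ∈ T`. In the latter case `b = h * (t * s)` for a generator or inverse generator `s`,
so `x` is in the component of `h * f` with `f = t * s` ranging over a finite set. Since `S` is
stable under left multiplication by `H`, `f ∉ S` as well.
-/

/-- One step in the Cayley graph of `G` w.r.t. generators `σ`, staying outside `S`:
`x` and `y` lie outside `S` and differ by right multiplication by some `σ i` or its
inverse. -/
def cayleyStepOutside {G : Type*} [Group G] {d : ℕ} (σ : Fin d → G) (S : Set G)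
    (x y : G) : Prop :=
  x ∉ S ∧ y ∉ S ∧ ∃ i : Fin d, y = x * σ i ∨ y = x * (σ i)⁻¹

open Pointwise Relation

namespace Relation

def RestrictCompl {α : Type*} (r : α → α → Prop) (S : Set α) (a b : α) : Prop :=
  a ∉ S ∧ b ∉ S ∧ r a b

theorem ReflTransGen.restrictCompl_or_exit {α : Type*} {r : α → α → Prop} {S : Set α}
    {x y : α} (hx : x ∉ S) (hxy : ReflTransGen r x y) :
    (y ∉ S ∧ ReflTransGen (RestrictCompl r S) x y) ∨
      ∃ b c, ReflTransGen (RestrictCompl r S) x b ∧ b ∉ S ∧ r b c ∧ c ∈ S := by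
  induction hxy with
  | refl => exact .inl ⟨hx, .refl⟩
  | @tail b c _ hbc ih =>
    obtain ⟨hb, hxb⟩ | hexit := ih
    · by_cases hc : c ∈ S
      · exact .inr ⟨b, c, hxb, hb, hbc, hc⟩
      · exact .inl ⟨hc, hxb.tail ⟨hb, hc, hbc⟩⟩
    · exact .inr hexit

end Relation

section Cayley

variable {G : Type*} [Group G] {d : ℕ}

def CayleyAdj (σ : Fin d → G) (x y : G) : Prop :=
  ∃ i : Fin d, y = x * σ i ∨ y = x * (σ i)⁻¹

def symmGens [DecidableEq G] (σ : Fin d → G) : Finset G :=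
  Finset.univ.image σ ∪ Finset.univ.image fun i => (σ i)⁻¹

theorem cayleyStepOutside_eq_restrictCompl (σ : Fin d → G) (S : Set G) :
    cayleyStepOutside σ S = RestrictCompl (CayleyAdj σ) S :=
  rfl

theorem CayleyAdj.mul_left {σ : Fin d → G} {x y : G} (g : G) (hxy : CayleyAdj σ x y) :
    CayleyAdj σ (g * x) (g * y) := by
  obtain ⟨i, rfl | rfl⟩ := hxy
  exacts [⟨i, .inl (mul_assoc ..).symm⟩, ⟨i, .inr (mul_assoc ..).symm⟩]

theorem CayleyAdj.exists_mem_symmGens_eq_mul [DecidableEq G] {σ : Fin d → G} {x y : G}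
    (hxy : CayleyAdj σ x y) : ∃ s ∈ symmGens σ, x = y * s := by
  obtain ⟨i, rfl | rfl⟩ := hxy
  · exact ⟨(σ i)⁻¹, by simp [symmGens], by group⟩
  · exact ⟨σ i, by simp [symmGens], by group⟩

theorem reflTransGen_cayleyAdj_one {σ : Fin d → G} (hgen : Subgroup.closure (Set.range σ) = ⊤)
    (g : G) : ReflTransGen (CayleyAdj σ) 1 g := by
  have hg : g ∈ Subgroup.closure (Set.range σ) := hgen ▸ Subgroup.mem_top g
  induction hg using Subgroup.closure_induction_right with
  | one => exact .refl
  | mul_right x _ y hy ih =>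
    obtain ⟨i, rfl⟩ := hy
    exact ih.tail ⟨i, .inl rfl⟩
  | mul_inv_cancel x _ y hy ih =>
    obtain ⟨i, rfl⟩ := hy
    exact ih.tail ⟨i, .inr rfl⟩

theorem reflTransGen_cayleyAdj {σ : Fin d → G} (hgen : Subgroup.closure (Set.range σ) = ⊤)
    (x y : G) : ReflTransGen (CayleyAdj σ) x y := by
  simpa [Function.onFun] using
    (reflTransGen_cayleyAdj_one hgen (x⁻¹ * y)).lift (x * ·) fun _ _ ↦ CayleyAdj.mul_left x

end Cayley

theorem mul_mem_iUnion_image_mul_right {G : Type*} [Group G] {H : Subgroup G} {T : Set G}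
    {h x : G} (hh : h ∈ H) (hx : x ∈ ⋃ t ∈ T, (· * t) '' (H : Set G)) :
    h * x ∈ ⋃ t ∈ T, (· * t) '' (H : Set G) := by
  simp only [Set.mem_iUnion, Set.mem_image, SetLike.mem_coe] at hx ⊢
  obtain ⟨t, ht, k, hk, rfl⟩ := hx
  exact ⟨t, ht, h * k, H.mul_mem hh hk, mul_assoc ..⟩

theorem finitely_many_H_orbits_of_components
    {G : Type*} [Group G] {d : ℕ} (σ : Fin d → G)
    (hgen : Subgroup.closure (Set.range σ) = ⊤)
    (H : Subgroup G) (T : Finset G)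
    (S : Set G) (hS : S = ⋃ t ∈ T, (fun h => h * t) '' (H : Set G)) :
    ∃ F : Finset G, (↑F : Set G) ⊆ Sᶜ ∧
      ∀ x : G, x ∉ S → ∃ f ∈ F, ∃ h ∈ H,
        Relation.ReflTransGen (cayleyStepOutside σ S) x (h * f) := by
  classical
  refine ⟨{f ∈ insert 1 (T * symmGens σ) | f ∉ S}, fun f hf ↦ (Finset.mem_filter.1 hf).2,
    fun x hx ↦ ?_⟩
  rw [cayleyStepOutside_eq_restrictCompl]
  obtain ⟨h1, hx1⟩ | ⟨b, c, hxb, hb, hbc, hc⟩ :=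
    (reflTransGen_cayleyAdj hgen x 1).restrictCompl_or_exit hx
  · exact ⟨1, by simp [h1], 1, H.one_mem, by simpa using hx1⟩
  obtain ⟨s, hs, rfl⟩ := hbc.exists_mem_symmGens_eq_mul
  rw [hS] at hb hc
  simp only [Set.mem_iUnion, Set.mem_image, SetLike.mem_coe] at hc
  obtain ⟨t, ht, h, hh, rfl⟩ := hc
  have hts : t * s ∉ S := by
    rw [hS]
    exact fun hts ↦
      hb (mul_assoc h t s ▸ mul_mem_iUnion_image_mul_right (T := (T : Set G)) hh hts)
  refine ⟨t * s, ?_, h, hh, by simpa [mul_assoc] using hxb⟩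
  simpa [hts] using Or.inr (Finset.mul_mem_mul ht hs)
end
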